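/- Let dʰ be an optimal solution of the High Point Relaxation: dʰ minimizes ‖d - d̃‖₂² over the set N = {d : ∃ x ≥ 0, g(x,d) ≥ 0 and |f(x) - f̃| ≤ β}, where d° ∈ N. Then ‖dʰ - d°‖₂ ≤ 2‖d̃ - d°‖₂. -/

import Mathlib

theorem norm_sub_le_two_mul_of_norm_sub_le {E : Type*} [SeminormedAddCommGroup E] {x y z : E}
    (h : ‖x - z‖ ≤ ‖y - z‖) : ‖x - y‖ ≤ 2 * ‖z - y‖ :=
  calc ‖x - y‖ ≤ ‖x - z‖ + ‖z - y‖ := norm_sub_le_norm_sub_add_norm_sub x z y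
    _ ≤ ‖z - y‖ + ‖z - y‖ := by rw [← norm_sub_rev y z]; gcongr
    _ = 2 * ‖z - y‖ := (two_mul _).symm

theorem stmt14_general (m : ℕ)
    (N : Set (EuclideanSpace ℝ (Fin m)))
    (dO dT dH : EuclideanSpace ℝ (Fin m))
    (hO : dO ∈ N)
    (hmin : ∀ d ∈ N, ‖dH - dT‖ ^ 2 ≤ ‖d - dT‖ ^ 2) :
    ‖dH - dO‖ ≤ 2 * ‖dT - dO‖ :=
  norm_sub_le_two_mul_of_norm_sub_le <|
    (pow_le_pow_iff_left₀ (norm_nonneg _) (norm_nonneg _) two_ne_zero).mp (hmin dO hO)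

theorem stmt14 (m n k : ℕ)
    (g : (Fin n → ℝ) → EuclideanSpace ℝ (Fin m) → (Fin k → ℝ))
    (f : (Fin n → ℝ) → ℝ) (fT β : ℝ)
    (N : Set (EuclideanSpace ℝ (Fin m)))
    (hN : N = {d | ∃ x : Fin n → ℝ, (∀ i, 0 ≤ x i) ∧ (∀ j, 0 ≤ g x d j) ∧ |f x - fT| ≤ β})
    (dO dT dH : EuclideanSpace ℝ (Fin m))
    (hO : dO ∈ N) (hH : dH ∈ N)
    (hmin : ∀ d ∈ N, ‖dH - dT‖ ^ 2 ≤ ‖d - dT‖ ^ 2) :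
    ‖dH - dO‖ ≤ 2 * ‖dT - dO‖ :=
  stmt14_general m N dO dT dH hO hmin
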